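/- Let Q, Q' be elements of the shape-regular parametric Bézier mesh that are neighbors, i.e. dist(Q,Q') ≤ C·h_Q with C independent of the mesh size. Then there exists a constant C' > 0, depending only on the polynomial degree k, the shape regularity of the mesh, and the distance between Q and Q', such that for every tensor-product polynomial p ∈ Q_k(R^d), ‖p‖_{L^∞(Q)} ≤ C' ‖p‖_{L^∞(Q')}. -/

import Mathlib

open Set Metric MeasureTheory

noncomputable section

/-- Euclidean space `ℝᵈ`. -/
abbrev Euc (d : ℕ) : Type := EuclideanSpace ℝ (Fin d)

/-- The open axis-aligned box with lower corner `a` and upper corner `b`. -/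
def box {d : ℕ} (a b : Fin d → ℝ) : Set (Euc d) :=
  {x : Euc d | ∀ i, x i ∈ Ioo (a i) (b i)}

/-- Tensor-product polynomial functions of coordinate degree at most `k`
(the space `Q_k(ℝᵈ)`). -/
def IsQPoly {d : ℕ} (k : ℕ) (f : Euc d → ℝ) : Prop :=
  ∃ P : MvPolynomial (Fin d) ℝ, (∀ i, P.degreeOf i ≤ k) ∧
    ∀ x : Euc d, f x = MvPolynomial.eval (fun i => x i) P

/-!
Since `Q` and `Q'` are neighbours of comparable size and `Q'` is shape regular, `Q` lies in
the box obtained from `Q'` by enlarging every edge by a fixed factor `2M + 1`, with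
`M = (1 + c) cq / ρ`. On such an enlarged box a tensor-product polynomial of coordinate
degree `k` is bounded by its sup on `Q'`: in one variable, Lagrange interpolation at `k + 1`
equispaced interior nodes bounds `|q(x)|` by `(k + 1) ((M + 1) (k + 2))^k` times the
largest nodal value, and freezing one coordinate at a time yields the `d`-th power of that
constant.
-/

namespace Lagrange

theorem abs_eval_basis_le {k : ℕ} {t : Fin (k + 1) → ℝ} {δ R x : ℝ} (hδ : 0 < δ)
    (hsep : ∀ i j, i ≠ j → δ ≤ |t i - t j|) (hR : ∀ i, |x - t i| ≤ R) (j : Fin (k + 1)) :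
    |(Lagrange.basis Finset.univ t j).eval x| ≤ (R / δ) ^ k := by
  rw [Lagrange.basis, Polynomial.eval_prod, Finset.abs_prod]
  calc ∏ i ∈ Finset.univ.erase j, |(basisDivisor (t j) (t i)).eval x|
      ≤ ∏ _i ∈ Finset.univ.erase j, R / δ := by
        refine Finset.prod_le_prod (fun i _ => abs_nonneg _) fun i hi => ?_
        have hsep_ji := hsep j i (Finset.ne_of_mem_erase hi).symm
        simp only [basisDivisor, Polynomial.eval_mul, Polynomial.eval_C, Polynomial.eval_sub,
          Polynomial.eval_X, abs_mul, abs_inv]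
        rw [inv_mul_eq_div]
        exact div_le_div₀ ((abs_nonneg _).trans (hR i)) (hR i) hδ hsep_ji
    _ = (R / δ) ^ k := by simp [div_pow]

theorem abs_eval_le_of_separated {k : ℕ} {q : Polynomial ℝ} (hq : q.natDegree ≤ k)
    {t : Fin (k + 1) → ℝ} {δ R x : ℝ} (hδ : 0 < δ)
    (hsep : ∀ i j, i ≠ j → δ ≤ |t i - t j|) (hR : ∀ i, |x - t i| ≤ R) :
    |q.eval x| ≤ (R / δ) ^ k * ∑ j, |q.eval (t j)| := by
  have ht : InjOn t (Finset.univ : Finset (Fin (k + 1))) := fun i _ j _ hij => by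
    by_contra hne
    simpa [hij] using hδ.trans_le (hsep i j hne)
  have hdeg : q.degree < (Finset.univ : Finset (Fin (k + 1))).card := by
    rw [Finset.card_univ, Fintype.card_fin]
    exact (Polynomial.degree_le_natDegree).trans_lt (by exact_mod_cast Nat.lt_succ_of_le hq)
  conv_lhs => rw [eq_interpolate ht hdeg, interpolate_apply, Polynomial.eval_finsetSum]
  rw [Finset.mul_sum]
  refine (Finset.abs_sum_le_sum_abs _ _).trans (Finset.sum_le_sum fun j _ => ?_)
  simp only [Polynomial.eval_mul, Polynomial.eval_C, abs_mul]
  rw [mul_comm]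
  exact mul_le_mul_of_nonneg_right (abs_eval_basis_le hδ hsep hR j) (abs_nonneg _)

end Lagrange

def equispacedNode (k : ℕ) (u v : ℝ) (j : Fin (k + 1)) : ℝ :=
  u + (j + 1) * (v - u) / (k + 2)

section equispacedNode

variable {k : ℕ} {u v : ℝ}

theorem equispacedNode_mem_Ioo (huv : u < v) (j : Fin (k + 1)) :
    equispacedNode k u v j ∈ Ioo u v := by
  have hj : (j : ℝ) + 1 < k + 2 := by
    have : (j : ℝ) < k + 1 := by exact_mod_cast j.isLt
    linarith
  have hpos : 0 < ((j : ℝ) + 1) * (v - u) / (k + 2) := by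
    have : 0 < v - u := sub_pos.mpr huv
    positivity
  have hlt : ((j : ℝ) + 1) * (v - u) / (k + 2) < v - u := by
    rw [div_lt_iff₀ (by positivity)]
    nlinarith
  constructor <;> simp only [equispacedNode] <;> linarith

theorem le_abs_equispacedNode_sub (huv : u < v) {i j : Fin (k + 1)} (hij : i ≠ j) :
    (v - u) / (k + 2) ≤ |equispacedNode k u v i - equispacedNode k u v j| := by
  have hsub : equispacedNode k u v i - equispacedNode k u v j
      = ((i : ℝ) - j) * ((v - u) / (k + 2)) := by
    simp only [equispacedNode]
    ring
  have hone : (1 : ℝ) ≤ |(i : ℝ) - j| := by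
    have hne : ((i : ℕ) : ℤ) ≠ j := by exact_mod_cast Fin.val_injective.ne hij
    exact_mod_cast Int.one_le_abs (sub_ne_zero.mpr hne)
  have hpos : 0 < (v - u) / (k + 2) := div_pos (sub_pos.mpr huv) (by positivity)
  rw [hsub, abs_mul, abs_of_pos hpos]
  exact le_mul_of_one_le_left hpos.le hone

end equispacedNode

theorem Polynomial.abs_eval_le_of_abs_eval_equispacedNode_le {k : ℕ} {q : Polynomial ℝ}
    (hq : q.natDegree ≤ k) {M u v x S : ℝ} (hM : 0 ≤ M) (huv : u < v)
    (hx : x ∈ Icc (u - M * (v - u)) (v + M * (v - u)))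
    (hS : ∀ j, |q.eval (equispacedNode k u v j)| ≤ S) :
    |q.eval x| ≤ (k + 1) * ((M + 1) * (k + 2)) ^ k * S := by
  have hL : 0 < v - u := sub_pos.mpr huv
  have hR : ∀ j, |x - equispacedNode k u v j| ≤ (M + 1) * (v - u) := fun j => by
    have := equispacedNode_mem_Ioo (k := k) huv j
    rw [abs_le]
    constructor <;> nlinarith [hx.1, hx.2, this.1, this.2]
  have hratio : (M + 1) * (v - u) / ((v - u) / (k + 2)) = (M + 1) * (k + 2) := by
    field_simp
  calc |q.eval x|
      ≤ ((M + 1) * (k + 2)) ^ k * ∑ j, |q.eval (equispacedNode k u v j)| := by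
        simpa only [hratio] using Lagrange.abs_eval_le_of_separated hq
          (div_pos hL (by positivity)) (fun i j => le_abs_equispacedNode_sub huv) hR
    _ ≤ ((M + 1) * (k + 2)) ^ k * ∑ _j : Fin (k + 1), S := by gcongr with j; exact hS j
    _ = (k + 1) * ((M + 1) * (k + 2)) ^ k * S := by
      simp only [Finset.sum_const, Finset.card_univ, Fintype.card_fin, nsmul_eq_mul, Nat.cast_add,
        Nat.cast_one]
      ring

namespace Euc

def cons {d : ℕ} (t : ℝ) (y : Euc d) : Euc (d + 1) :=
  WithLp.toLp 2 (Fin.cons t y.ofLp)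

def tail {d : ℕ} (x : Euc (d + 1)) : Euc d :=
  WithLp.toLp 2 (Fin.tail x.ofLp)

theorem cons_zero_tail {d : ℕ} (x : Euc (d + 1)) : cons (x 0) (tail x) = x := by
  ext i
  exact Fin.cases rfl (fun _ => rfl) i

theorem cons_mem_box {d : ℕ} {a b : Fin (d + 1) → ℝ} {t : ℝ} {y : Euc d}
    (ht : t ∈ Ioo (a 0) (b 0)) (hy : y ∈ box (Fin.tail a) (Fin.tail b)) : cons t y ∈ box a b :=
  fun i => Fin.cases ht hy i

theorem eval_cons {d : ℕ} (P : MvPolynomial (Fin (d + 1)) ℝ) (t : ℝ) (y : Euc d) :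
    MvPolynomial.eval (fun i => cons t y i) P
      = ((MvPolynomial.finSuccEquiv ℝ d P).map (MvPolynomial.eval fun i => y i)).eval t :=
  MvPolynomial.eval_eq_eval_mv_eval' _ _ _

end Euc

theorem isBounded_box {d : ℕ} (a b : Fin d → ℝ) : Bornology.IsBounded (box a b) := by
  have hK : IsCompact ((EuclideanSpace.equiv (Fin d) ℝ) ⁻¹' univ.pi fun i => Icc (a i) (b i)) :=
    (EuclideanSpace.equiv (Fin d) ℝ).toHomeomorph.isCompact_preimage.mpr
      (isCompact_univ_pi fun i => isCompact_Icc)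
  exact hK.isBounded.subset fun y hy i _ => Ioo_subset_Icc_self (hy i)

namespace IsQPoly

variable {d k : ℕ}

theorem continuous {f : Euc d → ℝ} (hf : IsQPoly k f) : Continuous f := by
  obtain ⟨P, -, hP⟩ := hf
  rw [funext hP]
  exact (MvPolynomial.continuous_eval P).comp (EuclideanSpace.equiv (Fin d) ℝ).continuous

theorem bddAbove_abs_image_box {f : Euc d → ℝ} (hf : IsQPoly k f) (a b : Fin d → ℝ) :
    BddAbove ((fun y => |f y|) '' box a b) := by
  obtain ⟨C, hC⟩ := (isBounded_box a b).isCompact_closure.exists_bound_of_continuousOn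
    hf.continuous.continuousOn
  refine ⟨C, ?_⟩
  rintro _ ⟨y, hy, rfl⟩
  exact hC y (subset_closure hy)

theorem comp_cons {f : Euc (d + 1) → ℝ} (hf : IsQPoly k f) (t : ℝ) :
    IsQPoly k fun y => f (Euc.cons t y) := by
  obtain ⟨P, hPdeg, hP⟩ := hf
  set Q := MvPolynomial.finSuccEquiv ℝ d P
  refine ⟨Q.eval (MvPolynomial.C t), fun i => ?_, fun y => ?_⟩
  · rw [Polynomial.eval_eq_sum_range]
    refine (MvPolynomial.degreeOf_sum_le _ _ _).trans (Finset.sup_le fun m _ => ?_)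
    refine (MvPolynomial.degreeOf_mul_le _ _ _).trans ?_
    rw [← map_pow, MvPolynomial.degreeOf_C, add_zero]
    exact (MvPolynomial.degreeOf_coeff_finSuccEquiv P i m).trans (hPdeg i.succ)
  · show f _ = _
    rw [hP, Euc.eval_cons, Polynomial.eval_map, Polynomial.eval, Polynomial.hom_eval₂]
    simp only [RingHomCompTriple.comp_eq, MvPolynomial.eval_C, Q]

theorem exists_polynomial_comp_cons {f : Euc (d + 1) → ℝ} (hf : IsQPoly k f) (y : Euc d) :
    ∃ q : Polynomial ℝ, q.natDegree ≤ k ∧ ∀ t, f (Euc.cons t y) = q.eval t := by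
  obtain ⟨P, hPdeg, hP⟩ := hf
  refine ⟨(MvPolynomial.finSuccEquiv ℝ d P).map (MvPolynomial.eval fun i => y i), ?_,
    fun t => by rw [hP, Euc.eval_cons]⟩
  refine Polynomial.natDegree_map_le.trans ?_
  rw [MvPolynomial.natDegree_finSuccEquiv]
  exact hPdeg 0

end IsQPoly

def enlargedBox {d : ℕ} (M : ℝ) (a b : Fin d → ℝ) : Set (Euc d) :=
  {x : Euc d | ∀ i, x i ∈ Icc (a i - M * (b i - a i)) (b i + M * (b i - a i))}

theorem IsQPoly.abs_le_of_forall_mem_box {d k : ℕ} {M S : ℝ} (hM : 0 ≤ M)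
    {a b : Fin d → ℝ} (hab : ∀ i, a i < b i) {f : Euc d → ℝ} (hf : IsQPoly k f)
    (hS : ∀ y ∈ box a b, |f y| ≤ S) {x : Euc d} (hx : x ∈ enlargedBox M a b) :
    |f x| ≤ ((k + 1) * ((M + 1) * (k + 2)) ^ k) ^ d * S := by
  induction d with
  | zero => simpa using hS x finZeroElim
  | succ d ih =>
    obtain ⟨q, hqdeg, hq⟩ := hf.exists_polynomial_comp_cons (Euc.tail x)
    have hnodes (j : Fin (k + 1)) : |q.eval (equispacedNode k (a 0) (b 0) j)|
        ≤ ((k + 1) * ((M + 1) * (k + 2)) ^ k) ^ d * S := by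
      rw [← hq]
      exact ih (fun i => hab i.succ) (hf.comp_cons _)
        (fun y hy => hS _ (Euc.cons_mem_box (equispacedNode_mem_Ioo (hab 0) j) hy))
        (fun i => hx i.succ)
    calc |f x| = |q.eval (x 0)| := by rw [← hq, Euc.cons_zero_tail]
      _ ≤ (k + 1) * ((M + 1) * (k + 2)) ^ k * (((k + 1) * ((M + 1) * (k + 2)) ^ k) ^ d * S) :=
        q.abs_eval_le_of_abs_eval_equispacedNode_le hqdeg hM (hab 0) (hx 0) hnodes
      _ = ((k + 1) * ((M + 1) * (k + 2)) ^ k) ^ (d + 1) * S := by ring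

theorem mem_enlargedBox_of_dist_le {d : ℕ} {ρ c cq : ℝ} (hρ : 0 < ρ) (hc : 0 ≤ c) (hcq : 0 ≤ cq)
    {a b a' b' : Fin d → ℝ} (hreg' : ∀ i, ρ * diam (box a' b') ≤ b' i - a' i)
    {x y z : Euc d} (hx : x ∈ box a b) (hy : y ∈ box a b) (hz : z ∈ box a' b')
    (hyz : dist y z ≤ c * diam (box a b)) (hqu : diam (box a b) ≤ cq * diam (box a' b')) :
    x ∈ enlargedBox ((1 + c) * cq / ρ) a' b' := by
  intro i
  have hdiam' : diam (box a' b') ≤ (b' i - a' i) / ρ := by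
    rw [le_div_iff₀ hρ]
    linarith [hreg' i]
  have hxz : |x i - z i| ≤ (1 + c) * cq / ρ * (b' i - a' i) :=
    calc |x i - z i| ≤ dist x z := by simpa [Real.dist_eq] using PiLp.dist_apply_le x z i
      _ ≤ dist x y + dist y z := dist_triangle x y z
      _ ≤ diam (box a b) + c * diam (box a b) :=
        add_le_add (dist_le_diam_of_mem (isBounded_box a b) hx hy) hyz
      _ = (1 + c) * diam (box a b) := by ring
      _ ≤ (1 + c) * (cq * ((b' i - a' i) / ρ)) := by gcongr; exact hqu.trans (by gcongr)
      _ = (1 + c) * cq / ρ * (b' i - a' i) := by ring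
  rw [abs_le] at hxz
  constructor <;> linarith [(hz i).1, (hz i).2, hxz.1, hxz.2]

/-- Lemma A.3.  Let `Q, Q'` be elements of a shape-regular
parametric Bézier mesh (axis-aligned boxes whose edges are comparable to their
diameters with constant `ρ`, the mesh being locally quasi-uniform with constant
`cq`) that are neighbors, i.e. `dist(Q,Q') ≤ c ⋅ h_Q`.  Then there exists a
constant `C > 0`, depending only on the polynomial degree `k`, the shape
regularity of the mesh and on the distance between `Q` and `Q'` (i.e. on
`k, ρ, c, cq` and `d`), such that `‖p‖_{L^∞(Q)} ≤ C ‖p‖_{L^∞(Q')}` for every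
tensor-product polynomial `p ∈ Q_k(ℝᵈ)`. -/
theorem poly_sup_neighbor_bound (d k : ℕ) (ρ c cq : ℝ)
    (hρ : 0 < ρ) (hc : 0 < c) (hcq : 0 < cq) :
    ∃ C > (0 : ℝ), ∀ a b a' b' : Fin d → ℝ,
      (∀ i, a i < b i) → (∀ i, a' i < b' i) →
      -- shape regularity of both elements
      (∀ i, ρ * diam (box a b) ≤ b i - a i) →
      (∀ i, ρ * diam (box a' b') ≤ b' i - a' i) →
      -- `Q` and `Q'` are neighbors: `dist(Q, Q') ≤ c ⋅ diam Q`
      (∃ x ∈ box a b, ∃ y ∈ box a' b', dist x y ≤ c * diam (box a b)) →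
      -- local quasi-uniformity: the sizes of neighboring elements are comparable
      diam (box a b) ≤ cq * diam (box a' b') →
      ∀ f : Euc d → ℝ, IsQPoly k f →
        ∀ x ∈ box a b, |f x| ≤ C * sSup ((fun y => |f y|) '' box a' b') := by
  set M := (1 + c) * cq / ρ
  have hM : 0 ≤ M := by positivity
  refine ⟨((k + 1) * ((M + 1) * (k + 2)) ^ k) ^ d, by positivity, ?_⟩
  rintro a b a' b' - hab' - hreg' ⟨y, hy, z, hz, hyz⟩ hqu f hf x hx
  exact hf.abs_le_of_forall_mem_box hM hab'
    (fun w hw => le_csSup (hf.bddAbove_abs_image_box a' b') ⟨w, hw, rfl⟩)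
    (mem_enlargedBox_of_dist_le hρ hc.le hcq.le hreg' hx hy hz hyz hqu)

end
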